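/- Let η be the totally antisymmetric array on {1,…,6}³ determined by η(3,4,6) = 1 and η(2,4,5) = −1 (all entries not obtained from these two by permutations being zero), and let D := span{e₁, e₃, e₆} ⊆ ℂ⁶. Then: (i) η is effective, and for every symmetric 3×3 complex matrix A, with v_i := e_i + Σ_{j=1}^{3} A_{ij} e_{j+3} (so L_A = span{v₁,v₂,v₃} is Lagrangian), one has Σ_{i,j,k} η(i,j,k)·(v₁)_i·(v₂)_j·(v₃)_k = 2(A₁₁A₂₃ − A₁₂A₁₃), and this quantity vanishes if and only if L_A ∩ D ≠ {0} (so the hyperplane section of the Lagrangian Grassmannian cut out by η is the Goursat–Schubert cycle E_D); (ii) D^⊥ = span{e₁, e₂, e₅} and D ∩ D^⊥ = ℂ·e₁; (iii) q(η) is the matrix whose only nonzero entry is q(η)(4,4) = 4, so the zero locus {u ∈ ℂ⁶ : q(η)(u,u) = 0} equals {u : u₄ = 0} = (D ∩ D^⊥)^⊥, i.e., the cocharacteristic variety of this Goursat-type Monge–Ampère equation is the hyperplane (D ∩ D^⊥)^⊥. -/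

import Mathlib

open scoped Matrix

noncomputable section

/-- The matrix `J = [[0, I₃], [-I₃, 0]]` of the standard symplectic form on `ℂ⁶`. -/
def J : Matrix (Fin 6) (Fin 6) ℂ :=
  Matrix.of fun i j => if (i : ℕ) + 3 = (j : ℕ) then 1 else if (j : ℕ) + 3 = (i : ℕ) then -1 else 0

/-- The matrix `W = -J`, so `W(i, i+3) = -1` and `W(i+3, i) = 1` for `i = 1, 2, 3`. -/
def W : Matrix (Fin 6) (Fin 6) ℂ := -J

/-- A totally antisymmetric array `η : {1,…,6}³ → ℂ`: it changes sign under the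
transposition of any two of its three arguments. -/
def IsAlt (η : Fin 6 → Fin 6 → Fin 6 → ℂ) : Prop :=
  (∀ i j k, η j i k = -η i j k) ∧ (∀ i j k, η i k j = -η i j k) ∧
    (∀ i j k, η k j i = -η i j k)

/-- An array `η` is effective if `Σ_{i,j} W(i,j) · η(i,j,k) = 0` for every `k`. -/
def IsEff (η : Fin 6 → Fin 6 → Fin 6 → ℂ) : Prop :=
  ∀ k, (∑ i, ∑ j, W i j * η i j k) = 0

/-- The KLR contraction of a `3`-form `η`: the symmetric `6 × 6` matrix with entries
`q(η)(a,b) = Σ_{i,j,h,k} η(a,i,j) · η(b,h,k) · W(i,h) · W(j,k)`. -/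
def klr (η : Fin 6 → Fin 6 → Fin 6 → ℂ) : Matrix (Fin 6) (Fin 6) ℂ :=
  Matrix.of fun a b => ∑ i, ∑ j, ∑ h, ∑ k, η a i j * η b h k * W i h * W j k

/-- The standard symplectic form `ω(u, v) = uᵀ J v` on `ℂ⁶`. -/
def omg (u v : Fin 6 → ℂ) : ℂ := ∑ i, ∑ j, u i * J i j * v j

/-- The Plücker array of vectors `v₁, v₂, v₃ ∈ ℂ⁶`: its `(i,j,k)` entry is the
determinant of the `3 × 3` matrix whose `m`-th row is `((v_m)_i, (v_m)_j, (v_m)_k)`. -/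
def plk (v : Fin 3 → Fin 6 → ℂ) : Fin 6 → Fin 6 → Fin 6 → ℂ :=
  fun i j k => Matrix.det (Matrix.of fun m n => v m (![i, j, k] n))

/-- The `m`-th standard basis vector of `ℂ⁶`. -/
def stdv (m : Fin 6) : Fin 6 → ℂ := fun i => if i = m then 1 else 0

/-- The symplectic orthogonal `D^⊥ = {u ∈ ℂ⁶ : ω(d, u) = 0 for all d ∈ D}` of a
subspace `D ⊆ ℂ⁶`. -/
def sorth (D : Submodule ℂ (Fin 6 → ℂ)) : Submodule ℂ (Fin 6 → ℂ) where
  carrier := {u | ∀ d ∈ D, omg d u = 0}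
  zero_mem' := by
    intro d _
    simp [omg]
  add_mem' := by
    intro a b ha hb d hd
    have h : omg d (a + b) = omg d a + omg d b := by
      simp only [omg, Pi.add_apply, mul_add]
      rw [← Finset.sum_add_distrib]
      exact Finset.sum_congr rfl fun i _ => by rw [← Finset.sum_add_distrib]
    simp only [Set.mem_setOf_eq] at *
    rw [h, ha d hd, hb d hd, add_zero]
  smul_mem' := by
    intro c a ha d hd
    have h : omg d (c • a) = c * omg d a := by
      simp only [omg, Pi.smul_apply, smul_eq_mul, Finset.mul_sum]
      exact Finset.sum_congr rfl fun i _ => Finset.sum_congr rfl fun j _ => by ring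
    simp only [Set.mem_setOf_eq] at *
    rw [h, ha d hd, mul_zero]

/-- The `i`-th spanning vector `e_i + Σ_j A_{ij} e_{j+3}` of the graph subspace `L_A`. -/
def graphVec (A : Matrix (Fin 3) (Fin 3) ℂ) (i : Fin 3) : Fin 6 → ℂ := fun k =>
  if h : (k : ℕ) < 3 then (if (k : ℕ) = (i : ℕ) then 1 else 0)
  else A i ⟨(k : ℕ) - 3, by omega⟩

/-- The graph subspace `L_A = span{e_i + Σ_j A_{ij} e_{j+3} : i = 1, 2, 3} ⊆ ℂ⁶`. -/
def LA (A : Matrix (Fin 3) (Fin 3) ℂ) : Submodule ℂ (Fin 6 → ℂ) :=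
  Submodule.span ℂ (Set.range (graphVec A))

/-- The totally antisymmetric array determined by `η(3,4,6) = 1` and
`η(2,4,5) = -1` (all entries not obtained from these two by permutations being
zero), written via Plücker arrays of basis vectors. -/
def etaG : Fin 6 → Fin 6 → Fin 6 → ℂ :=
  fun i j l => plk ![stdv 2, stdv 3, stdv 5] i j l - plk ![stdv 1, stdv 3, stdv 4] i j l

/-- The `3`-dimensional subspace `D = span{e₁, e₃, e₆} ⊆ ℂ⁶`. -/
def Dgou : Submodule ℂ (Fin 6 → ℂ) :=
  Submodule.span ℂ {stdv 0, stdv 2, stdv 5}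

/-!
Since `η = plk(e₃, e₄, e₆) - plk(e₂, e₄, e₅)`, contracting `η` with three vectors gives the
difference of two `3 × 3` minors of the matrix of those vectors; on the graph of `A` this is the
stated quadratic, and `L_A ∩ D ≠ 0` becomes the vanishing of a `2 × 2` determinant. The form `W`
pairs each index `i` only with `i + 3` (mod 6), which collapses the `W`-contractions and shows that
the symplectic orthogonal of the coordinate subspace on `S` is the one on the complement of `S + 3`.
-/

open Finset

lemma plk_apply (u v w : Fin 6 → ℂ) (a i j : Fin 6) :
    plk ![u, v, w] a i j = u a * (v i * w j - w i * v j) - v a * (u i * w j - w i * u j)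
      + w a * (u i * v j - v i * u j) := by
  simp [plk, Matrix.det_fin_three]
  ring

lemma isAlt_plk (u v w : Fin 6 → ℂ) : IsAlt (plk ![u, v, w]) := by
  refine ⟨?_, ?_, ?_⟩ <;> intro i j k <;> simp only [plk_apply] <;> ring

lemma IsAlt.sub {η η' : Fin 6 → Fin 6 → Fin 6 → ℂ} (h : IsAlt η) (h' : IsAlt η') :
    IsAlt (fun i j k => η i j k - η' i j k) := by
  obtain ⟨h₁, h₂, h₃⟩ := h
  obtain ⟨h₁', h₂', h₃'⟩ := h'
  exact ⟨fun i j k => by dsimp only; rw [h₁, h₁']; ring,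
    fun i j k => by dsimp only; rw [h₂, h₂']; ring,
    fun i j k => by dsimp only; rw [h₃, h₃']; ring⟩

lemma sum_plk_mul (u v w x y z : Fin 6 → ℂ) :
    ∑ i, ∑ j, ∑ l, plk ![u, v, w] i j l * x i * y j * z l =
      !![u ⬝ᵥ x, u ⬝ᵥ y, u ⬝ᵥ z; v ⬝ᵥ x, v ⬝ᵥ y, v ⬝ᵥ z; w ⬝ᵥ x, w ⬝ᵥ y, w ⬝ᵥ z].det := by
  have triple (a b c : Fin 6 → ℂ) : ∑ i, ∑ j, ∑ l, a i * b j * c l * x i * y j * z l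
      = (a ⬝ᵥ x) * (b ⬝ᵥ y) * (c ⬝ᵥ z) := by
    rw [mul_assoc, dotProduct, dotProduct, dotProduct, sum_mul_sum, sum_mul]
    refine sum_congr rfl fun i _ => ?_
    rw [mul_sum]
    refine sum_congr rfl fun j _ => ?_
    rw [mul_sum]
    exact sum_congr rfl fun l _ => by ring
  have expand (i j l : Fin 6) : plk ![u, v, w] i j l * x i * y j * z l =
      u i * v j * w l * x i * y j * z l - u i * w j * v l * x i * y j * z l
      - v i * u j * w l * x i * y j * z l + v i * w j * u l * x i * y j * z l
      + w i * u j * v l * x i * y j * z l - w i * v j * u l * x i * y j * z l := by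
    rw [plk_apply]
    ring
  simp only [expand, sum_add_distrib, sum_sub_distrib, triple, Matrix.det_fin_three]
  simp
  ring

lemma stdv_dotProduct (m : Fin 6) (x : Fin 6 → ℂ) : stdv m ⬝ᵥ x = x m := by
  simp [stdv, dotProduct]

lemma etaG_two_three_five : etaG 2 3 5 = 1 := by
  simp [etaG, plk_apply, stdv]

lemma etaG_one_three_four : etaG 1 3 4 = -1 := by
  simp [etaG, plk_apply, stdv]

lemma isAlt_etaG : IsAlt etaG := (isAlt_plk _ _ _).sub (isAlt_plk _ _ _)

lemma sum_etaG_mul (x y z : Fin 6 → ℂ) :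
    ∑ i, ∑ j, ∑ l, etaG i j l * x i * y j * z l =
      !![x 2, y 2, z 2; x 3, y 3, z 3; x 5, y 5, z 5].det
        - !![x 1, y 1, z 1; x 3, y 3, z 3; x 4, y 4, z 4].det := by
  simp only [etaG, sub_mul, sum_sub_distrib, sum_plk_mul, stdv_dotProduct]

lemma sum_etaG_graphVec {A : Matrix (Fin 3) (Fin 3) ℂ} (hA : A.IsSymm) :
    ∑ i, ∑ j, ∑ l, etaG i j l * graphVec A 0 i * graphVec A 1 j * graphVec A 2 l
      = 2 * (A 0 0 * A 1 2 - A 0 1 * A 0 2) := by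
  rw [sum_etaG_mul]
  simp [graphVec, Matrix.det_fin_three, hA.apply 0 1, hA.apply 0 2, hA.apply 1 2]
  ring

/-- `W i j` vanishes unless `j = i + 3` in `Fin 6` (addition mod 6), where it equals `wSign i`. -/
def wSign (i : Fin 6) : ℂ := if (i : ℕ) < 3 then -1 else 1

lemma wSign_ne_zero (i : Fin 6) : wSign i ≠ 0 := by
  unfold wSign
  split_ifs <;> norm_num

lemma W_apply (i j : Fin 6) : W i j = if j = i + 3 then wSign i else 0 := by
  fin_cases i <;> fin_cases j <;> simp [W, J, wSign]

lemma sum_W_mul (i : Fin 6) (f : Fin 6 → ℂ) : ∑ j, W i j * f j = wSign i * f (i + 3) := by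
  simp [W_apply, ite_mul]

lemma isEff_iff (η : Fin 6 → Fin 6 → Fin 6 → ℂ) :
    IsEff η ↔ ∀ k, ∑ i, wSign i * η i (i + 3) k = 0 := by
  simp only [IsEff, sum_W_mul]

lemma isEff_etaG : IsEff etaG := by
  rw [isEff_iff]
  intro k
  fin_cases k <;> simp [Fin.sum_univ_six, wSign, etaG, plk_apply, stdv]

lemma klr_apply (η : Fin 6 → Fin 6 → Fin 6 → ℂ) (a b : Fin 6) :
    klr η a b = ∑ i, ∑ j, wSign i * wSign j * η a i j * η b (i + 3) (j + 3) := by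
  simp only [klr, Matrix.of_apply]
  refine sum_congr rfl fun i _ => sum_congr rfl fun j _ => ?_
  calc ∑ h, ∑ k, η a i j * η b h k * W i h * W j k
      = ∑ h, W i h * (η a i j * ∑ k, W j k * η b h k) := by
        simp only [mul_sum]
        exact sum_congr rfl fun h _ => sum_congr rfl fun k _ => by ring
    _ = _ := by
        simp only [sum_W_mul]
        ring

/- Only the index pairs `(i, j)` with `{i, j} = {2, 5}` or `{1, 4}` contribute, as these are the
pairs that `· + 3` preserves; each of the four contributes `1` to the `(3, 3)` entry. -/
lemma klr_etaG : klr etaG = Matrix.single 3 3 (4 : ℂ) := by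
  ext a b
  rw [klr_apply]
  fin_cases a <;> fin_cases b <;> simp [Fin.sum_univ_six, wSign, etaG, plk_apply, stdv]
  norm_num

lemma sum_mul_single_mul {n R : Type*} [Fintype n] [DecidableEq n] [CommSemiring R]
    (i j : n) (c : R) (u v : n → R) :
    ∑ a, ∑ b, u a * Matrix.single i j c a b * v b = u i * c * v j := by
  simp [Matrix.single_apply, ite_and]

lemma stdv_eq_single (m : Fin 6) : stdv m = Pi.single m 1 := by
  ext i
  simp [stdv, Pi.single_apply]

lemma mem_span_stdv_image {s : Set (Fin 6)} {u : Fin 6 → ℂ} :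
    u ∈ Submodule.span ℂ (stdv '' s) ↔ ∀ i ∉ s, u i = 0 := by
  have h := (Pi.basisFun ℂ (Fin 6)).mem_span_image (m := u) (s := s)
  simp only [Pi.basisFun_apply, ← stdv_eq_single] at h
  rw [h, Set.subset_def]
  simp only [Finset.mem_coe, Finsupp.mem_support_iff, Pi.basisFun_repr]
  exact forall_congr' fun i => not_imp_comm

lemma span_stdv_image_inf (s t : Set (Fin 6)) :
    Submodule.span ℂ (stdv '' s) ⊓ Submodule.span ℂ (stdv '' t)
      = Submodule.span ℂ (stdv '' (s ∩ t)) := by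
  ext u
  simp only [Submodule.mem_inf, mem_span_stdv_image, Set.mem_inter_iff, not_and_or]
  exact ⟨fun ⟨hs, ht⟩ i hi => hi.elim (hs i) (ht i),
    fun h => ⟨fun i hi => h i (.inl hi), fun i hi => h i (.inr hi)⟩⟩

lemma omg_add_left (a b u : Fin 6 → ℂ) : omg (a + b) u = omg a u + omg b u := by
  simp only [omg, Pi.add_apply, add_mul, sum_add_distrib]

lemma omg_smul_left (c : ℂ) (a u : Fin 6 → ℂ) : omg (c • a) u = c * omg a u := by
  simp only [omg, Pi.smul_apply, smul_eq_mul, mul_sum, mul_assoc]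

lemma omg_stdv_left (m : Fin 6) (u : Fin 6 → ℂ) : omg (stdv m) u = -(wSign m * u (m + 3)) := by
  have h : omg (stdv m) u = -∑ j, W m j * u j := by
    simp [omg, stdv, W, sum_neg_distrib]
  rw [h, sum_W_mul]

lemma mem_sorth_span {S : Set (Fin 6 → ℂ)} {u : Fin 6 → ℂ} :
    u ∈ sorth (Submodule.span ℂ S) ↔ ∀ d ∈ S, omg d u = 0 := by
  refine ⟨fun h d hd => h d (Submodule.subset_span hd), fun h d hd => ?_⟩
  induction hd using Submodule.span_induction with
  | mem x hx => exact h x hx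
  | zero => simp [omg]
  | add x y _ _ hx hy => rw [omg_add_left, hx, hy, add_zero]
  | smul c x _ hx => rw [omg_smul_left, hx, mul_zero]

lemma sorth_span_stdv_image (s : Set (Fin 6)) :
    sorth (Submodule.span ℂ (stdv '' s)) = Submodule.span ℂ (stdv '' ((· + 3) '' s)ᶜ) := by
  ext u
  rw [mem_sorth_span, mem_span_stdv_image]
  simp only [Set.mem_compl_iff, not_not, Set.forall_mem_image, omg_stdv_left, neg_eq_zero,
    mul_eq_zero, wSign_ne_zero, false_or]

lemma Dgou_eq : Dgou = Submodule.span ℂ (stdv '' {0, 2, 5}) := by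
  simp [Dgou, Set.image_insert_eq]

lemma sorth_Dgou : sorth Dgou = Submodule.span ℂ (stdv '' {0, 1, 4}) := by
  have h : ((· + 3) '' {0, 2, 5} : Set (Fin 6))ᶜ = {0, 1, 4} := by
    simp only [Set.image_insert_eq, Set.image_singleton]
    ext i
    fin_cases i <;> simp
  rw [Dgou_eq, sorth_span_stdv_image, h]

lemma Dgou_inf_sorth : Dgou ⊓ sorth Dgou = Submodule.span ℂ (stdv '' {0}) := by
  have h : ({0, 2, 5} ∩ {0, 1, 4} : Set (Fin 6)) = {0} := by
    ext i
    fin_cases i <;> simp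
  rw [sorth_Dgou, Dgou_eq, span_stdv_image_inf, h]

lemma sum_smul_graphVec_eq_zero_iff (A : Matrix (Fin 3) (Fin 3) ℂ) (c : Fin 3 → ℂ) :
    ∑ i, c i • graphVec A i = 0 ↔ c = 0 := by
  refine ⟨fun h => ?_, fun h => by simp [h]⟩
  have h0 := congrFun h 0
  have h1 := congrFun h 1
  have h2 := congrFun h 2
  simp [Fin.sum_univ_three, graphVec] at h0 h1 h2
  ext i
  fin_cases i <;> simp [h0, h1, h2]

lemma sum_smul_graphVec_mem_Dgou_iff (A : Matrix (Fin 3) (Fin 3) ℂ) (c : Fin 3 → ℂ) :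
    ∑ i, c i • graphVec A i ∈ Dgou ↔
      c 1 = 0 ∧ c 0 * A 0 0 + c 2 * A 2 0 = 0 ∧ c 0 * A 0 1 + c 2 * A 2 1 = 0 := by
  rw [Dgou_eq, mem_span_stdv_image]
  constructor
  · intro h
    have h1 := h 1 (by simp)
    have h3 := h 3 (by simp)
    have h4 := h 4 (by simp)
    simp [Fin.sum_univ_three, graphVec] at h1
    simp [Fin.sum_univ_three, graphVec, h1] at h3 h4
    exact ⟨h1, h3, h4⟩
  · rintro ⟨h1, h3, h4⟩ i hi
    fin_cases i <;> simp [Fin.sum_univ_three, graphVec, h1] at hi ⊢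
    · exact h3
    · exact h4

lemma LA_inf_Dgou_ne_bot_iff (A : Matrix (Fin 3) (Fin 3) ℂ) :
    LA A ⊓ Dgou ≠ ⊥ ↔ !![A 0 0, A 2 0; A 0 1, A 2 1].det = 0 := by
  rw [← Matrix.exists_mulVec_eq_zero_iff, Submodule.ne_bot_iff]
  constructor
  · rintro ⟨x, hx, hx0⟩
    obtain ⟨hxL, hxD⟩ := Submodule.mem_inf.1 hx
    obtain ⟨c, rfl⟩ := (Submodule.mem_span_range_iff_exists_fun ℂ).1 hxL
    obtain ⟨h1, h3, h4⟩ := (sum_smul_graphVec_mem_Dgou_iff A c).1 hxD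
    refine ⟨![c 0, c 2], fun h => hx0 ?_, ?_⟩
    · rw [sum_smul_graphVec_eq_zero_iff]
      ext i
      fin_cases i
      exacts [congrFun h 0, h1, congrFun h 1]
    · ext m
      fin_cases m
      · simp [Matrix.mulVec, dotProduct]
        linear_combination h3
      · simp [Matrix.mulVec, dotProduct]
        linear_combination h4
  · rintro ⟨d, hd0, hd⟩
    have e0 := congrFun hd 0
    have e1 := congrFun hd 1
    simp [Matrix.mulVec, dotProduct] at e0 e1
    refine ⟨∑ i, ![d 0, 0, d 1] i • graphVec A i,
      Submodule.mem_inf.2 ⟨(Submodule.mem_span_range_iff_exists_fun ℂ).2 ⟨_, rfl⟩, ?_⟩, ?_⟩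
    · rw [sum_smul_graphVec_mem_Dgou_iff]
      exact ⟨rfl, show d 0 * A 0 0 + d 1 * A 2 0 = 0 by linear_combination e0,
        show d 0 * A 0 1 + d 1 * A 2 1 = 0 by linear_combination e1⟩
    · rw [Ne, sum_smul_graphVec_eq_zero_iff]
      intro h
      apply hd0
      ext m
      fin_cases m
      exacts [congrFun h 0, congrFun h 2]

/-- For the Goursat-type array `η` with `η(3,4,6) = 1`, `η(2,4,5) = -1` and
`D = span{e₁, e₃, e₆}`:
(i) `η` is effective, and on the Lagrangian subspace `L_A` spanned by
`v_i = e_i + Σ_j A_{ij} e_{j+3}` (`A` symmetric) one has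
`Σ η(i,j,k) (v₁)_i (v₂)_j (v₃)_k = 2(A₁₁A₂₃ - A₁₂A₁₃)`, which vanishes iff
`L_A ∩ D ≠ 0` (the hyperplane section cut out by `η` is the Goursat–Schubert cycle);
(ii) `D^⊥ = span{e₁, e₂, e₅}` and `D ∩ D^⊥ = ℂ·e₁`;
(iii) the only nonzero entry of `q(η)` is `q(η)(4,4) = 4`, and its zero locus
`{u : q(η)(u,u) = 0}` is the hyperplane `{u : u₄ = 0} = (D ∩ D^⊥)^⊥`: the
cocharacteristic variety of this Goursat-type Monge–Ampère equation is the
hyperplane `(D ∩ D^⊥)^⊥`. -/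
theorem statement_19 :
    -- the array and its defining entries
    etaG 2 3 5 = 1 ∧ etaG 1 3 4 = -1 ∧ IsAlt etaG ∧
    -- (i) effectivity and the hyperplane section
    IsEff etaG ∧
    (∀ A : Matrix (Fin 3) (Fin 3) ℂ, A.IsSymm →
      (∑ i, ∑ j, ∑ l, etaG i j l * graphVec A 0 i * graphVec A 1 j * graphVec A 2 l)
          = 2 * (A 0 0 * A 1 2 - A 0 1 * A 0 2) ∧
      ((∑ i, ∑ j, ∑ l, etaG i j l * graphVec A 0 i * graphVec A 1 j * graphVec A 2 l) = 0
        ↔ LA A ⊓ Dgou ≠ ⊥)) ∧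
    -- (ii) the symplectic orthogonal and the characteristic line
    sorth Dgou = Submodule.span ℂ {stdv 0, stdv 1, stdv 4} ∧
    Dgou ⊓ sorth Dgou = Submodule.span ℂ {stdv 0} ∧
    -- (iii) the KLR contraction and the cocharacteristic variety
    klr etaG = Matrix.single 3 3 (4 : ℂ) ∧
    {u : Fin 6 → ℂ | (∑ a, ∑ b, u a * klr etaG a b * u b) = 0} = {u : Fin 6 → ℂ | u 3 = 0} ∧
    {u : Fin 6 → ℂ | u 3 = 0} = ↑(sorth (Dgou ⊓ sorth Dgou)) := by
  refine ⟨etaG_two_three_five, etaG_one_three_four, isAlt_etaG, isEff_etaG, fun A hA => ?_,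
    by simp [sorth_Dgou, Set.image_insert_eq], by simp [Dgou_inf_sorth], klr_etaG, ?_, ?_⟩
  · refine ⟨sum_etaG_graphVec hA, ?_⟩
    rw [sum_etaG_graphVec hA, LA_inf_Dgou_ne_bot_iff, Matrix.det_fin_two_of, hA.apply 0 2,
      hA.apply 1 2, mul_comm (A 0 2)]
    simp
  · ext u
    simp [klr_etaG, sum_mul_single_mul]
  · ext u
    rw [Set.mem_ofPred_eq, SetLike.mem_coe, Dgou_inf_sorth, sorth_span_stdv_image,
      mem_span_stdv_image]
    simp
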